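/- For any two graphs G and H, the degree lower bound DLB(G,H) — defined as the minimal cost of a bijection between the dummy-padded vertex sets of G and H with ground cost c_dlb(u,v) = (c_e/2)·|δ(u) − δ(v)| (dummies having degree 0) — is at most the graph edit distance GED(G,H). -/

import Mathlib

open scoped Classical

/-- A labeled graph: finite vertex set (of natural-number names), finite loop-free edge set,
vertex and edge labeling functions. -/
structure LGraph (Lv Le : Type) where
  verts : Finset ℕ
  edges : Finset (Sym2 ℕ)
  vl : ℕ → Lv
  el : Sym2 ℕ → Le

namespace LGraph

variable {Lv Le : Type}

/-- Well-formedness: edges are loop-free and their endpoints are vertices. -/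
def WF (G : LGraph Lv Le) : Prop :=
  (∀ e ∈ G.edges, ¬ e.IsDiag) ∧ ∀ e ∈ G.edges, ∀ v ∈ e, v ∈ G.verts

/-- The degree of a vertex: the number of incident edges. -/
noncomputable def degree (G : LGraph Lv Le) (v : ℕ) : ℕ :=
  (G.edges.filter fun e => v ∈ e).card

/-- Edit operations: insert/delete/relabel a vertex, insert/delete/relabel an edge. -/
inductive Op (Lv Le : Type) where
  | addV (v : ℕ) (l : Lv)
  | delV (v : ℕ)
  | relV (v : ℕ) (l : Lv)
  | addE (u v : ℕ) (l : Le)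
  | delE (e : Sym2 ℕ)
  | relE (e : Sym2 ℕ) (l : Le)

/-- Applying an edit operation to a graph; `none` if the operation is invalid
(e.g. deleting a non-isolated vertex). -/
noncomputable def apply (o : Op Lv Le) (G : LGraph Lv Le) : Option (LGraph Lv Le) :=
  match o with
  | .addV v l => if v ∈ G.verts then none else
      some ⟨insert v G.verts, G.edges, Function.update G.vl v l, G.el⟩
  | .delV v => if v ∈ G.verts ∧ ∀ e ∈ G.edges, v ∉ e then
      some ⟨G.verts.erase v, G.edges, G.vl, G.el⟩ else none
  | .relV v l => if v ∈ G.verts then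
      some ⟨G.verts, G.edges, Function.update G.vl v l, G.el⟩ else none
  | .addE u v l => if u ∈ G.verts ∧ v ∈ G.verts ∧ u ≠ v ∧ s(u, v) ∉ G.edges then
      some ⟨G.verts, insert s(u, v) G.edges, G.vl, Function.update G.el s(u, v) l⟩ else none
  | .delE e => if e ∈ G.edges then
      some ⟨G.verts, G.edges.erase e, G.vl, G.el⟩ else none
  | .relE e l => if e ∈ G.edges then
      some ⟨G.verts, G.edges, G.vl, Function.update G.el e l⟩ else none

/-- Applying a sequence of edit operations (an edit path). -/
noncomputable def applyList : List (Op Lv Le) → LGraph Lv Le → Option (LGraph Lv Le)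
  | [], G => some G
  | o :: os, G => (apply o G).bind (applyList os)

/-- Cost of a single edit operation, with vertex insertion/deletion cost `cv`, vertex
relabeling cost `cvl`, edge insertion/deletion cost `ce` and edge relabeling cost `cel`. -/
def opCost (cv cvl ce cel : ℝ) : Op Lv Le → ℝ
  | .addV _ _ => cv
  | .delV _ => cv
  | .relV _ _ => cvl
  | .addE _ _ _ => ce
  | .delE _ => ce
  | .relE _ _ => cel

/-- Graph isomorphism: a bijection of the vertex sets preserving labels, adjacency and
edge labels. -/
def Iso (G H : LGraph Lv Le) : Prop :=
  ∃ f : ℕ → ℕ, Set.BijOn f ↑G.verts ↑H.verts ∧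
    (∀ v ∈ G.verts, H.vl (f v) = G.vl v) ∧
    (∀ u ∈ G.verts, ∀ v ∈ G.verts, (s(u, v) ∈ G.edges ↔ s(f u, f v) ∈ H.edges)) ∧
    (∀ u ∈ G.verts, ∀ v ∈ G.verts, s(u, v) ∈ G.edges → H.el s(f u, f v) = G.el s(u, v))

/-- The graph edit distance: the infimum of the total cost over all edit paths
transforming `G` into a graph isomorphic to `H`. -/
noncomputable def GED (cv cvl ce cel : ℝ) (G H : LGraph Lv Le) : ℝ :=
  sInf {r | ∃ (ops : List (Op Lv Le)) (H' : LGraph Lv Le),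
    applyList ops G = some H' ∧ Iso H' H ∧ r = (ops.map (opCost cv cvl ce cel)).sum}

/-- The vertex set of `G` padded with one dummy vertex (`Sum.inr`) for every vertex
of `H`, so that the padded vertex sets of `G` and `H` have equal cardinality. -/
abbrev PadV (G H : LGraph Lv Le) : Type := {x // x ∈ G.verts} ⊕ {x // x ∈ H.verts}

/-- Ground cost `c_llb`: 0 for equal labels or two dummies, `cvl` for distinct labels,
`cv` for matching a vertex with a dummy. -/
noncomputable def cllb (cv cvl : ℝ) (G H : LGraph Lv Le) : PadV G H → PadV H G → ℝ
  | .inl u, .inl v => if G.vl u.1 = H.vl v.1 then 0 else cvl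
  | .inl _, .inr _ => cv
  | .inr _, .inl _ => cv
  | .inr _, .inr _ => 0

/-- Degree of a padded vertex; dummies have degree 0. -/
noncomputable def padDeg (G H : LGraph Lv Le) : PadV G H → ℕ
  | .inl u => G.degree u.1
  | .inr _ => 0

/-- Ground cost `c_dlb(u,v) = (ce/2)·|δ(u) − δ(v)|`. -/
noncomputable def cdlb (ce : ℝ) (G H : LGraph Lv Le) (x : PadV G H) (y : PadV H G) : ℝ :=
  ce / 2 * |(padDeg G H x : ℝ) - (padDeg H G y : ℝ)|

/-- Optimal assignment cost between the padded vertex sets of `G` and `H` under a ground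
cost `c`: the minimum over all bijections `f` of `∑ x, c x (f x)`. -/
noncomputable def oaCost (G H : LGraph Lv Le) (c : PadV G H → PadV H G → ℝ) : ℝ :=
  sInf {r | ∃ f : PadV G H ≃ PadV H G, r = ∑ x, c x (f x)}

/-- The label lower bound. -/
noncomputable def LLB (cv cvl : ℝ) (G H : LGraph Lv Le) : ℝ :=
  oaCost G H (cllb cv cvl G H)

/-- The degree lower bound. -/
noncomputable def DLB (ce : ℝ) (G H : LGraph Lv Le) : ℝ :=
  oaCost G H (cdlb ce G H)

/-- The combined lower bound `CLB = LLB + DLB`. -/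
noncomputable def CLB (cv cvl ce : ℝ) (G H : LGraph Lv Le) : ℝ :=
  LLB cv cvl G H + DLB ce G H

end LGraph

/-!
Every edit operation lowers `DLB` by at most its cost and `DLB` vanishes between isomorphic
graphs, so `DLB` bounds the cost of every edit path from below, hence also their infimum `GED`
(edit paths exist: delete `G`, then build a copy of `H`).

Relabelings leave all degrees unchanged. Inserting or deleting an edge changes the degrees of at
most two vertices, each by one, so an optimal assignment for one graph costs at most `2 · ce/2`
more for the other. Inserting or deleting an isolated vertex adds or removes a degree-0 vertex on
one side together with a dummy on the other, and this leaves the optimal assignment cost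
unchanged: the two vertices matched to the new vertex and to the new dummy can be matched to each
other instead, at no greater cost by the triangle inequality.
-/

open Finset

section AssignCost

variable {α β : Type*} [Fintype α]

noncomputable def assignCost (c : α → β → ℝ) : ℝ :=
  sInf {r | ∃ f : α ≃ β, r = ∑ x, c x (f x)}

lemma assignCost_eq_sInf_range (c : α → β → ℝ) :
    assignCost c = sInf (Set.range fun f : α ≃ β => ∑ x, c x (f x)) := by
  simp only [assignCost, Set.range, eq_comm]

lemma assignCost_le (c : α → β → ℝ) (f : α ≃ β) : assignCost c ≤ ∑ x, c x (f x) := by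
  rw [assignCost_eq_sInf_range]
  exact csInf_le (Set.finite_range _).bddBelow ⟨f, rfl⟩

lemma exists_assignCost_eq [Nonempty (α ≃ β)] (c : α → β → ℝ) :
    ∃ f : α ≃ β, assignCost c = ∑ x, c x (f x) := by
  rw [assignCost_eq_sInf_range]
  obtain ⟨f, hf⟩ :=
    (Set.range_nonempty _).csInf_mem (Set.finite_range fun f : α ≃ β => ∑ x, c x (f x))
  exact ⟨f, hf.symm⟩

lemma assignCost_le_add_sum [Nonempty (α ≃ β)] {c c' : α → β → ℝ} (w : α → ℝ)
    (h : ∀ x y, c x y ≤ c' x y + w x) : assignCost c ≤ assignCost c' + ∑ x, w x := by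
  obtain ⟨f, hf⟩ := exists_assignCost_eq c'
  calc assignCost c ≤ ∑ x, c x (f x) := assignCost_le c f
    _ ≤ ∑ x, (c' x (f x) + w x) := sum_le_sum fun x _ => h x (f x)
    _ = assignCost c' + ∑ x, w x := by rw [sum_add_distrib, hf]

lemma assignCost_congr {α' β' : Type*} [Fintype α'] (eα : α ≃ α') (eβ : β ≃ β')
    {c : α → β → ℝ} {c' : α' → β' → ℝ} (h : ∀ x y, c' (eα x) (eβ y) = c x y) :
    assignCost c = assignCost c' := by
  rw [assignCost_eq_sInf_range, assignCost_eq_sInf_range]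
  congr 1
  ext r
  constructor
  · rintro ⟨f, rfl⟩
    refine ⟨eα.symm.trans (f.trans eβ), ?_⟩
    dsimp only
    rw [← eα.sum_comp]
    simp [h]
  · rintro ⟨g, rfl⟩
    refine ⟨eα.trans (g.trans eβ.symm), ?_⟩
    dsimp only
    rw [← eα.sum_comp]
    simp [← h]

lemma sum_removeNone_le {c : Option α → Option β → ℝ} (h0 : c none none = 0)
    (htri : ∀ a b, c (some a) (some b) ≤ c (some a) none + c none (some b))
    (g : Option α ≃ Option β) :
    ∑ a, c (some a) (some (g.removeNone a)) ≤ ∑ x, c x (g x) := by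
  have hsome {a : α} (ha : g (some a) ≠ none) : g (some a) = some (g.removeNone a) :=
    (Equiv.removeNone_some g (Option.ne_none_iff_exists'.mp ha)).symm
  rw [Fintype.sum_option]
  cases hg : g none with
  | none =>
    have hne (a : α) : g (some a) ≠ none := fun ha =>
      Option.some_ne_none a (g.injective (ha.trans hg.symm))
    simp [h0, hsome (hne _)]
  | some b₀ =>
    obtain ⟨a₀, ha₀⟩ : ∃ a₀, g.symm none = some a₀ :=
      Option.ne_none_iff_exists'.mp fun h => by simp [Equiv.option_symm_apply_none_iff, hg] at h
    rw [Equiv.symm_apply_eq] at ha₀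
    -- `g` sends `some a₀ ↦ none ↦ some b₀`; `g.removeNone` shortcuts this to `a₀ ↦ b₀`.
    have hb₀ : g.removeNone a₀ = b₀ :=
      Option.some_injective _ ((Equiv.removeNone_none g ha₀.symm).trans hg)
    rw [← add_sum_erase _ _ (mem_univ a₀), ← add_sum_erase _ _ (mem_univ a₀), ← ha₀, hb₀]
    have hrest : ∑ a ∈ univ.erase a₀, c (some a) (some (g.removeNone a)) =
        ∑ a ∈ univ.erase a₀, c (some a) (g (some a)) := by
      refine sum_congr rfl fun a ha => ?_
      rw [hsome fun h => ne_of_mem_erase ha (Option.some_injective _ (g.injective (h.trans ha₀)))]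
    linarith [htri a₀ b₀]

lemma assignCost_option [Nonempty (α ≃ β)] {c : Option α → Option β → ℝ} (h0 : c none none = 0)
    (htri : ∀ a b, c (some a) (some b) ≤ c (some a) none + c none (some b)) :
    assignCost c = assignCost fun a b => c (some a) (some b) := by
  apply le_antisymm
  · obtain ⟨f, hf⟩ := exists_assignCost_eq fun a b => c (some a) (some b)
    calc assignCost c ≤ ∑ x, c x (f.optionCongr x) := assignCost_le c _
      _ = _ := by simp [Fintype.sum_option, h0, hf]
  · have : Nonempty (Option α ≃ Option β) := .map Equiv.optionCongr ‹_›
    obtain ⟨g, hg⟩ := exists_assignCost_eq c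
    exact (assignCost_le _ g.removeNone).trans (hg ▸ sum_removeNone_le h0 htri g)

end AssignCost

namespace Equiv

variable (α β : Type*)

def optionSumEquiv : Option α ⊕ β ≃ Option (α ⊕ β) where
  toFun
    | .inl none => none
    | .inl (some a) => some (.inl a)
    | .inr b => some (.inr b)
  invFun
    | none => .inl none
    | some (.inl a) => .inl (some a)
    | some (.inr b) => .inr b
  left_inv := by rintro ((_ | a) | b) <;> rfl
  right_inv := by rintro (_ | a | b) <;> rfl

def sumOptionEquiv : α ⊕ Option β ≃ Option (α ⊕ β) where
  toFun
    | .inl a => some (.inl a)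
    | .inr none => none
    | .inr (some b) => some (.inr b)
  invFun
    | none => .inr none
    | some (.inl a) => .inl a
    | some (.inr b) => .inr (some b)
  left_inv := by rintro (a | _ | b) <;> rfl
  right_inv := by rintro (_ | a | b) <;> rfl

end Equiv

lemma Sym2.card_filter_mem_le_two {α : Type*} [DecidableEq α] (s : Finset α) (e : Sym2 α) :
    #(s.filter (· ∈ e)) ≤ 2 := by
  induction e using Sym2.ind with
  | _ a b => exact (card_le_card fun u hu => by simpa using (mem_filter.mp hu).2).trans card_le_two

namespace LGraph

variable {Lv Le : Type}

def EdgesSubVerts (G : LGraph Lv Le) : Prop :=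
  ∀ e ∈ G.edges, ∀ v ∈ e, v ∈ G.verts

lemma EdgesSubVerts.of_apply {G G' : LGraph Lv Le} {o : Op Lv Le} (hG : G.EdgesSubVerts)
    (h : apply o G = some G') : G'.EdgesSubVerts := by
  cases o <;> simp only [apply] at h <;> split_ifs at h with hc <;> cases h <;>
    intro e he x hx <;> simp only at he ⊢
  · exact mem_insert_of_mem (hG e he x hx)
  · exact mem_erase.mpr ⟨fun hxv => hc.2 e he (hxv ▸ hx), hG e he x hx⟩
  · exact hG e he x hx
  · rcases mem_insert.mp he with rfl | he
    · rcases Sym2.mem_iff.mp hx with rfl | rfl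
      exacts [hc.1, hc.2.1]
    · exact hG e he x hx
  · exact hG e (mem_of_mem_erase he) x hx
  · exact hG e he x hx

instance (G H : LGraph Lv Le) : Nonempty (PadV G H ≃ PadV H G) := ⟨Equiv.sumComm _ _⟩

lemma dlb_eq_assignCost (ce : ℝ) (G H : LGraph Lv Le) : DLB ce G H = assignCost (cdlb ce G H) :=
  rfl

lemma dlb_congr_labels (ce : ℝ) (G H : LGraph Lv Le) (vl' : ℕ → Lv) (el' : Sym2 ℕ → Le) :
    DLB ce ⟨G.verts, G.edges, vl', el'⟩ H = DLB ce G H :=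
  assignCost_congr (.refl _) (.refl _) (by rintro (u | w) (w' | u') <;> rfl)

lemma degree_eq_zero_of_forall_notMem {G : LGraph Lv Le} {v : ℕ} (h : ∀ e ∈ G.edges, v ∉ e) :
    G.degree v = 0 := by
  simpa [degree, filter_eq_empty_iff] using h

lemma dlb_insert_isolated {ce : ℝ} (hce : 0 ≤ ce) {G : LGraph Lv Le} (H : LGraph Lv Le) {v : ℕ}
    (hv : v ∉ G.verts) (hiso : ∀ e ∈ G.edges, v ∉ e) (vl' : ℕ → Lv) (el' : Sym2 ℕ → Le) :
    DLB ce ⟨insert v G.verts, G.edges, vl', el'⟩ H = DLB ce G H := by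
  let eV := Finset.subtypeInsertEquivOption hv
  have hdeg (u : {x // x ∈ insert v G.verts}) :
      (eV u).elim 0 (fun w => G.degree w) = G.degree u := by
    by_cases hu : (u : ℕ) = v
    · simp [eV, Finset.subtypeInsertEquivOption, hu, degree_eq_zero_of_forall_notMem hiso]
    · simp [eV, Finset.subtypeInsertEquivOption, hu]
  have hL (x : PadV ⟨insert v G.verts, G.edges, vl', el'⟩ H) :
      (Equiv.optionSumEquiv _ _ (Equiv.sumCongr eV (.refl _) x)).elim 0 (padDeg G H) =
        padDeg _ H x := by
    rcases x with u | w
    · rw [Equiv.sumCongr_apply, Sum.map_inl]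
      change _ = G.degree u
      rw [← hdeg u]
      cases eV u <;> rfl
    · rfl
  have hR (y : PadV H ⟨insert v G.verts, G.edges, vl', el'⟩) :
      (Equiv.sumOptionEquiv _ _ (Equiv.sumCongr (.refl _) eV y)).elim 0 (padDeg H G) =
        padDeg H _ y := by
    rcases y with w | u
    · rfl
    · rw [Equiv.sumCongr_apply, Sum.map_inr]
      cases eV u <;> rfl
  -- The new vertex `v` and its dummy on `H`'s side both become `none`.
  rw [dlb_eq_assignCost, dlb_eq_assignCost,
    assignCost_congr ((Equiv.sumCongr eV (.refl _)).trans (Equiv.optionSumEquiv _ _))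
      ((Equiv.sumCongr (.refl _) eV).trans (Equiv.sumOptionEquiv _ _))
      (c' := fun x y => ce / 2 * |((x.elim 0 (padDeg G H) : ℕ) : ℝ) - (y.elim 0 (padDeg H G) : ℕ)|)
      fun x y => by simp only [Equiv.trans_apply, hL, hR]; rfl,
    assignCost_option (by simp)]
  · rfl
  · intro a b
    have := abs_sub_le (padDeg G H a : ℝ) 0 (padDeg H G b)
    simp only [Option.elim]
    nlinarith

lemma dlb_erase_isolated {ce : ℝ} (hce : 0 ≤ ce) {G : LGraph Lv Le} (H : LGraph Lv Le) {v : ℕ}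
    (hv : v ∈ G.verts) (hiso : ∀ e ∈ G.edges, v ∉ e) :
    DLB ce ⟨G.verts.erase v, G.edges, G.vl, G.el⟩ H = DLB ce G H := by
  have h := dlb_insert_isolated hce H (G := ⟨G.verts.erase v, G.edges, G.vl, G.el⟩)
    (notMem_erase v _) hiso G.vl G.el
  dsimp only at h
  rwa [insert_erase hv, dlb_congr_labels, eq_comm] at h

lemma degree_insert_edge {G : LGraph Lv Le} {e : Sym2 ℕ} (he : e ∉ G.edges) (V' : Finset ℕ)
    (vl' : ℕ → Lv) (el' : Sym2 ℕ → Le) (v : ℕ) :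
    degree ⟨V', insert e G.edges, vl', el'⟩ v = G.degree v + if v ∈ e then 1 else 0 := by
  simp only [degree, filter_insert]
  split_ifs
  · exact card_insert_of_notMem fun hm => he (mem_filter.mp hm).1
  · rfl

lemma abs_dlb_sub_dlb_insert_edge_le {ce : ℝ} (hce : 0 ≤ ce) (H : LGraph Lv Le) {G : LGraph Lv Le}
    {e : Sym2 ℕ} (he : e ∉ G.edges) (vl' : ℕ → Lv) (el' : Sym2 ℕ → Le) :
    |DLB ce G H - DLB ce ⟨G.verts, insert e G.edges, vl', el'⟩ H| ≤ ce := by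
  set G' : LGraph Lv Le := ⟨G.verts, insert e G.edges, vl', el'⟩
  let w (x : PadV G H) : ℝ := ce / 2 * |(padDeg G H x : ℝ) - padDeg G' H x|
  have hdiff (u : G.verts) : |(G.degree u : ℝ) - G'.degree u| = if (u : ℕ) ∈ e then 1 else 0 := by
    rw [degree_insert_edge he]
    split_ifs <;> simp
  have hw : ∑ x, w x ≤ ce :=
    calc ∑ x, w x = ce / 2 * #(G.verts.filter (· ∈ e)) := by
          simp [w, ← mul_sum, padDeg, hdiff,
            sum_attach G.verts fun u => if u ∈ e then (1 : ℝ) else 0]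
      _ ≤ ce / 2 * 2 := by
          gcongr
          exact_mod_cast Sym2.card_filter_mem_le_two G.verts e
      _ = ce := by ring
  have hH (y : PadV H G) : padDeg H G' y = padDeg H G y := by cases y <;> rfl
  have hstep (p p' q : ℕ) :
      ce / 2 * |(p : ℝ) - q| ≤ ce / 2 * |(p' : ℝ) - q| + ce / 2 * |(p : ℝ) - p'| := by
    nlinarith [abs_sub_le (p : ℝ) p' q]
  have hle := assignCost_le_add_sum (c := cdlb ce G H) (c' := cdlb ce G' H) w fun x y => by
    simpa only [cdlb, hH] using hstep (padDeg G H x) (padDeg G' H x) (padDeg H G y)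
  have hge := assignCost_le_add_sum (c := cdlb ce G' H) (c' := cdlb ce G H) w fun x y => by
    simpa only [cdlb, hH, w, abs_sub_comm] using hstep (padDeg G' H x) (padDeg G H x) (padDeg H G y)
  rw [abs_sub_le_iff, dlb_eq_assignCost, dlb_eq_assignCost]
  constructor <;> linarith

lemma abs_dlb_sub_dlb_erase_edge_le {ce : ℝ} (hce : 0 ≤ ce) (H : LGraph Lv Le) {G : LGraph Lv Le}
    {e : Sym2 ℕ} (he : e ∈ G.edges) :
    |DLB ce G H - DLB ce ⟨G.verts, G.edges.erase e, G.vl, G.el⟩ H| ≤ ce := by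
  have h := abs_dlb_sub_dlb_insert_edge_le hce H (G := ⟨G.verts, G.edges.erase e, G.vl, G.el⟩)
    (notMem_erase e _) G.vl G.el
  dsimp only at h
  rwa [insert_erase he, dlb_congr_labels, abs_sub_comm] at h

lemma degree_eq_card_filter_adj {G : LGraph Lv Le} (hG : G.EdgesSubVerts) (v : ℕ) :
    G.degree v = #(G.verts.filter fun w => s(v, w) ∈ G.edges) := by
  refine (card_bij (fun w _ => s(v, w)) ?_ ?_ ?_).symm
  · intro w hw
    exact mem_filter.mpr ⟨(mem_filter.mp hw).2, Sym2.mem_mk_left v w⟩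
  · intro a _ b _ h
    exact Sym2.congr_right.mp h
  · intro e he
    obtain ⟨heE, hve⟩ := mem_filter.mp he
    refine ⟨_, mem_filter.mpr ⟨hG e heE _ (Sym2.other_mem hve), ?_⟩, Sym2.other_spec hve⟩
    rwa [Sym2.other_spec]

lemma degree_eq_of_iso {K H : LGraph Lv Le} (hK : K.EdgesSubVerts) (hH : H.EdgesSubVerts)
    {f : ℕ → ℕ} (hf : Set.BijOn f K.verts H.verts)
    (hadj : ∀ u ∈ K.verts, ∀ v ∈ K.verts, (s(u, v) ∈ K.edges ↔ s(f u, f v) ∈ H.edges))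
    {v : ℕ} (hv : v ∈ K.verts) : H.degree (f v) = K.degree v := by
  rw [degree_eq_card_filter_adj hK, degree_eq_card_filter_adj hH]
  refine (card_nbij f ?_ (hf.injOn.mono fun w hw => (mem_filter.mp hw).1) ?_).symm
  · intro w hw
    rw [mem_coe, mem_filter] at hw ⊢
    exact ⟨hf.mapsTo hw.1, (hadj v hv w hw.1).mp hw.2⟩
  · intro y hy
    rw [mem_coe, mem_filter] at hy
    obtain ⟨w, hw, rfl⟩ := hf.surjOn hy.1
    exact ⟨w, by simpa using ⟨hw, (hadj v hv w hw).mpr hy.2⟩, rfl⟩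

lemma dlb_nonpos_of_iso (ce : ℝ) {K H : LGraph Lv Le} (hK : K.EdgesSubVerts)
    (hH : H.EdgesSubVerts) (h : Iso K H) : DLB ce K H ≤ 0 := by
  obtain ⟨f, hf, -, hadj, -⟩ := h
  let eV := hf.equiv f
  refine (assignCost_le _ (Equiv.sumCongr eV eV.symm)).trans (le_of_eq (sum_eq_zero ?_))
  rintro (u | w) -
  · have hu : ((eV u : H.verts) : ℕ) = f u := rfl
    simp [cdlb, padDeg, hu, degree_eq_of_iso hK hH hf hadj u.2]
  · simp [cdlb, padDeg]

lemma dlb_le_opCost_add {cv cvl ce cel : ℝ} (hcv : 0 ≤ cv) (hcvl : 0 ≤ cvl) (hce : 0 ≤ ce)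
    (hcel : 0 ≤ cel) (H : LGraph Lv Le) {G G' : LGraph Lv Le} {o : Op Lv Le}
    (hG : G.EdgesSubVerts) (h : apply o G = some G') :
    DLB ce G H ≤ opCost cv cvl ce cel o + DLB ce G' H := by
  cases o <;> simp only [apply] at h <;> split_ifs at h with hc <;> cases h <;> simp only [opCost]
  · rw [dlb_insert_isolated hce H hc fun e he hve => hc (hG e he _ hve)]
    exact le_add_of_nonneg_left hcv
  · rw [dlb_erase_isolated hce H hc.1 hc.2]
    exact le_add_of_nonneg_left hcv
  · exact (dlb_congr_labels ce G H _ _).symm.trans_le (le_add_of_nonneg_left hcvl)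
  · exact sub_le_iff_le_add.mp
      (abs_sub_le_iff.mp (abs_dlb_sub_dlb_insert_edge_le hce H hc.2.2.2 _ _)).1
  · exact sub_le_iff_le_add.mp (abs_sub_le_iff.mp (abs_dlb_sub_dlb_erase_edge_le hce H hc)).1
  · exact (dlb_congr_labels ce G H _ _).symm.trans_le (le_add_of_nonneg_left hcel)

lemma dlb_le_sum_opCost {cv cvl ce cel : ℝ} (hcv : 0 ≤ cv) (hcvl : 0 ≤ cvl) (hce : 0 ≤ ce)
    (hcel : 0 ≤ cel) {G H K : LGraph Lv Le} (hG : G.EdgesSubVerts) (hH : H.EdgesSubVerts)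
    {ops : List (Op Lv Le)} (hops : applyList ops G = some K) (hK : Iso K H) :
    DLB ce G H ≤ (ops.map (opCost cv cvl ce cel)).sum := by
  induction ops generalizing G with
  | nil =>
    cases hops
    simpa using dlb_nonpos_of_iso ce hG hH hK
  | cons o ops ih =>
    obtain ⟨G', h₁, h₂⟩ := Option.bind_eq_some_iff.mp hops
    rw [List.map_cons, List.sum_cons]
    linarith [dlb_le_opCost_add hcv hcvl hce hcel H hG h₁, ih (hG.of_apply h₁) h₂]

def EditReachable (G G' : LGraph Lv Le) : Prop :=
  ∃ ops : List (Op Lv Le), applyList ops G = some G'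

lemma applyList_append (l₁ l₂ : List (Op Lv Le)) (G : LGraph Lv Le) :
    applyList (l₁ ++ l₂) G = (applyList l₁ G).bind (applyList l₂) := by
  induction l₁ generalizing G with
  | nil => rfl
  | cons o l ih =>
    change (apply o G).bind (applyList (l ++ l₂)) = ((apply o G).bind (applyList l)).bind _
    cases apply o G
    · rfl
    · exact ih _

namespace EditReachable

lemma refl (G : LGraph Lv Le) : EditReachable G G := ⟨[], rfl⟩

lemma trans {G₁ G₂ G₃ : LGraph Lv Le} (h₁ : EditReachable G₁ G₂) (h₂ : EditReachable G₂ G₃) :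
    EditReachable G₁ G₃ := by
  obtain ⟨l₁, h₁⟩ := h₁
  obtain ⟨l₂, h₂⟩ := h₂
  exact ⟨l₁ ++ l₂, by rw [applyList_append, h₁, Option.bind_some, h₂]⟩

lemma of_apply {G G' : LGraph Lv Le} {o : Op Lv Le} (h : apply o G = some G') :
    EditReachable G G' :=
  ⟨[o], by simp [applyList, h]⟩

end EditReachable

lemma editReachable_clear_edges (V : Finset ℕ) (E : Finset (Sym2 ℕ)) (vl : ℕ → Lv)
    (el : Sym2 ℕ → Le) : EditReachable ⟨V, E, vl, el⟩ ⟨V, ∅, vl, el⟩ := by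
  induction E using Finset.induction_on with
  | empty => exact .refl _
  | insert e E he ih =>
    exact .trans (.of_apply (o := .delE e) (by simp [apply, erase_insert he])) ih

lemma editReachable_clear_verts (V : Finset ℕ) (vl : ℕ → Lv) (el : Sym2 ℕ → Le) :
    EditReachable ⟨V, ∅, vl, el⟩ ⟨∅, ∅, vl, el⟩ := by
  induction V using Finset.induction_on with
  | empty => exact .refl _
  | insert v V hv ih =>
    exact .trans (.of_apply (o := .delV v) (by simp [apply, erase_insert hv])) ih

lemma exists_editReachable_add_verts (W : Finset ℕ) (lab vl : ℕ → Lv) (el : Sym2 ℕ → Le) :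
    ∃ vl' : ℕ → Lv, (∀ w ∈ W, vl' w = lab w) ∧ EditReachable ⟨∅, ∅, vl, el⟩ ⟨W, ∅, vl', el⟩ := by
  induction W using Finset.induction_on with
  | empty => exact ⟨vl, by simp, .refl _⟩
  | insert w W hw ih =>
    obtain ⟨vl', hvl', hr⟩ := ih
    refine ⟨Function.update vl' w (lab w), fun u hu => ?_,
      hr.trans (.of_apply (o := .addV w (lab w)) (by simp [apply, hw]))⟩
    rcases mem_insert.mp hu with rfl | hu
    · simp
    · rw [Function.update_of_ne (ne_of_mem_of_not_mem hu hw), hvl' u hu]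

lemma exists_editReachable_add_edges (W : Finset ℕ) (F : Finset (Sym2 ℕ))
    (hF : ∀ e ∈ F, ¬ e.IsDiag ∧ ∀ x ∈ e, x ∈ W) (lab el : Sym2 ℕ → Le) (vl : ℕ → Lv) :
    ∃ el' : Sym2 ℕ → Le, (∀ e ∈ F, el' e = lab e) ∧
      EditReachable ⟨W, ∅, vl, el⟩ ⟨W, F, vl, el'⟩ := by
  induction F using Finset.induction_on with
  | empty => exact ⟨el, by simp, .refl _⟩
  | insert f F hf ih =>
    obtain ⟨el', hel', hr⟩ := ih fun e he => hF e (mem_insert_of_mem he)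
    obtain ⟨hdiag, hW⟩ := hF f (mem_insert_self f F)
    have hout : s(f.out.1, f.out.2) = f := Quot.out_eq f
    have hne : f.out.1 ≠ f.out.2 := fun h => hdiag (by rw [← hout, Sym2.mk_isDiag_iff]; exact h)
    refine ⟨Function.update el' f (lab f), fun e he => ?_,
      hr.trans (.of_apply (o := .addE f.out.1 f.out.2 (lab f)) ?_)⟩
    · rcases mem_insert.mp he with rfl | he
      · simp
      · rw [Function.update_of_ne (ne_of_mem_of_not_mem he hf), hel' e he]
    · simp only [apply, hout]
      rw [if_pos ⟨hW _ (Sym2.out_fst_mem f), hW _ (Sym2.out_snd_mem f), hne, hf⟩]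

lemma exists_editReachable_iso (G : LGraph Lv Le) {H : LGraph Lv Le} (hH : H.WF) :
    ∃ K, EditReachable G K ∧ Iso K H := by
  obtain ⟨vl', hvl', h₃⟩ := exists_editReachable_add_verts H.verts H.vl G.vl G.el
  obtain ⟨el', hel', h₄⟩ := exists_editReachable_add_edges H.verts H.edges
    (fun e he => ⟨hH.1 e he, hH.2 e he⟩) H.el G.el vl'
  refine ⟨_, ((editReachable_clear_edges G.verts G.edges G.vl G.el).trans
    (editReachable_clear_verts G.verts G.vl G.el)).trans (h₃.trans h₄),
    id, Set.bijOn_id _, fun v hv => (hvl' v hv).symm, fun _ _ _ _ => Iff.rfl,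
    fun _ _ _ _ he => (hel' _ he).symm⟩

end LGraph

open LGraph in
/-- For any two graphs `G` and `H`, the degree lower bound `DLB(G,H)` —
the minimal cost of a bijection between the dummy-padded vertex sets under the ground cost
`c_dlb(u,v) = (ce/2)·|δ(u) − δ(v)|` (dummies having degree 0) — is at most the graph edit
distance `GED(G,H)`. -/
theorem dlb_le_ged {Lv Le : Type} (cv cvl ce cel : ℝ)
    (hcv : 0 ≤ cv) (hcvl : 0 ≤ cvl) (hce : 0 ≤ ce) (hcel : 0 ≤ cel)
    (G H : LGraph Lv Le) (hG : G.WF) (hH : H.WF) :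
    DLB ce G H ≤ GED cv cvl ce cel G H := by
  obtain ⟨K, ⟨ops, hops⟩, hK⟩ := exists_editReachable_iso G hH
  refine le_csInf ⟨_, ops, K, hops, hK, rfl⟩ ?_
  rintro r ⟨ops, K, hops, hK, rfl⟩
  exact dlb_le_sum_opCost hcv hcvl hce hcel hG.2 hH.2 hops hK
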